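/- Two tokens performing the same cyclic Euler tour of a tree (induced by basic walks from two different starting vertices), each required to advance at least once in every window of W consecutive rounds for some fixed W, will occupy the same vertex at the same time provided the token with larger label makes at least one full tour of the Euler cycle after the other token has permanently stopped. -/

import Mathlib

/-!
Write `N = 2(n - 1)` for the length of the cycle. A token that only stays or steps forward sits
at its start plus its number of moves, so the tokens meet at time `t` as soon as
`advancesBy b t - advancesBy a t ≡ a 0 - b 0 (mod N)`. This difference starts at `0`, grows by
at most one per round, and reaches `N` once `B` has made its `2λ₂(n - 1) ≥ 2λ₁(n - 1) + N`
moves, so it passes through the residue `(a 0 - b 0).val < N`.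
-/

/-- Number of forward moves of a token `a` on the Euler cycle during the first `T` rounds. -/
def advancesBy {N : ℕ} (a : ℕ → ZMod N) (T : ℕ) : ℕ :=
  ((Finset.range T).filter (fun t => a (t + 1) = a t + 1)).card

lemma advancesBy_eq_count {N : ℕ} (a : ℕ → ZMod N) (T : ℕ) :
    advancesBy a T = Nat.count (fun t => a (t + 1) = a t + 1) T :=
  (Nat.count_eq_card_filter_range _ T).symm

lemma advancesBy_monotone {N : ℕ} (a : ℕ → ZMod N) : Monotone (advancesBy a) := by
  simpa only [Monotone, advancesBy_eq_count] using Nat.count_monotone _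

lemma advancesBy_succ_le {N : ℕ} (a : ℕ → ZMod N) (T : ℕ) :
    advancesBy a (T + 1) ≤ advancesBy a T + 1 := by
  rw [advancesBy_eq_count, advancesBy_eq_count, Nat.count_succ]
  split <;> omega

lemma eq_add_advancesBy {N : ℕ} {a : ℕ → ZMod N}
    (ha : ∀ t, a (t + 1) = a t ∨ a (t + 1) = a t + 1) (t : ℕ) :
    a t = a 0 + advancesBy a t := by
  induction t with
  | zero => simp [advancesBy]
  | succ t ih =>
    rw [advancesBy_eq_count, Nat.count_succ, ← advancesBy_eq_count]
    by_cases h : a (t + 1) = a t + 1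
    · rw [if_pos h, h, ih]
      push_cast
      ring
    · rw [if_neg h, (ha t).resolve_right h, ih, Nat.add_zero]

lemma Int.exists_eq_of_le_succ {f : ℕ → ℤ} (hf : ∀ t, f (t + 1) ≤ f t + 1) {k : ℤ}
    (h0 : f 0 ≤ k) {T : ℕ} (hT : k ≤ f T) : ∃ t ≤ T, f t = k := by
  induction T with
  | zero => exact ⟨0, le_rfl, le_antisymm h0 hT⟩
  | succ T ih =>
    by_cases hk : k ≤ f T
    · obtain ⟨t, htT, ht⟩ := ih hk
      exact ⟨t, htT.trans T.le_succ, ht⟩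
    · exact ⟨T + 1, le_rfl, by linarith [hf T]⟩

lemma exists_eq_of_add_le_advancesBy {N : ℕ} [NeZero N] {a b : ℕ → ZMod N}
    (ha : ∀ t, a (t + 1) = a t ∨ a (t + 1) = a t + 1)
    (hb : ∀ t, b (t + 1) = b t ∨ b (t + 1) = b t + 1)
    {T : ℕ} (hT : advancesBy a T + N ≤ advancesBy b T) :
    ∃ t, a t = b t := by
  set gap : ℕ → ℤ := fun t => (advancesBy b t : ℤ) - advancesBy a t
  have hgap : ∀ t, gap (t + 1) ≤ gap t + 1 := fun t => by
    have := advancesBy_succ_le b t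
    have := advancesBy_monotone a (Nat.le_add_right t 1)
    simp only [gap]
    omega
  have hgap0 : gap 0 = 0 := by simp [gap, advancesBy]
  have hval := ZMod.val_lt (a 0 - b 0)
  obtain ⟨t, -, ht⟩ := Int.exists_eq_of_le_succ hgap (k := (a 0 - b 0).val)
    (by rw [hgap0]; positivity) (T := T) (by simp only [gap]; omega)
  have hmoves : advancesBy b t = advancesBy a t + (a 0 - b 0).val := by
    simp only [gap] at ht
    omega
  refine ⟨t, ?_⟩
  rw [eq_add_advancesBy ha t, eq_add_advancesBy hb t, hmoves, Nat.cast_add, ZMod.natCast_val,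
    ZMod.cast_id]
  ring

theorem euler_cycle_tokens_meet_general
    (n : ℕ) (hn : 2 ≤ n)
    (lam1 lam2 : ℕ) (hl : lam1 < lam2)
    (a b : ℕ → ZMod (2 * (n - 1)))
    (ha : ∀ t, a (t + 1) = a t ∨ a (t + 1) = a t + 1)
    (hb : ∀ t, b (t + 1) = b t ∨ b (t + 1) = b t + 1)
    (haLe : ∀ T, advancesBy a T ≤ 2 * lam1 * (n - 1))
    (hbEq : ∃ T, advancesBy b T = 2 * lam2 * (n - 1)) :
    ∃ t, a t = b t := by
  have : NeZero (2 * (n - 1)) := ⟨by omega⟩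
  obtain ⟨T, hT⟩ := hbEq
  refine exists_eq_of_add_le_advancesBy ha hb (T := T) ?_
  calc advancesBy a T + 2 * (n - 1)
      ≤ 2 * lam1 * (n - 1) + 2 * (n - 1) := Nat.add_le_add_right (haLe T) _
    _ = 2 * (lam1 + 1) * (n - 1) := by ring
    _ ≤ 2 * lam2 * (n - 1) := by gcongr; exact hl
    _ = advancesBy b T := hT.symm

/-- Two tokens traverse (forward only) the directed Euler cycle of length `2(n−1)`
induced by basic walks of a tree on `n` vertices. Token `A` (label `λ₁`) makes exactly
`2λ₁(n−1)` forward moves and stops; token `B` (label `λ₂ > λ₁`) makes exactly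
`2λ₂(n−1)` forward moves; each token, while not yet finished, advances at least once in
every window of `W` consecutive rounds. Then at some time both tokens occupy the same
node of the cycle. -/
theorem euler_cycle_tokens_meet
    (n : ℕ) (hn : 2 ≤ n) (W : ℕ) (hW : 0 < W)
    (lam1 lam2 : ℕ) (h1 : 0 < lam1) (hl : lam1 < lam2)
    (a b : ℕ → ZMod (2 * (n - 1)))
    (ha : ∀ t, a (t + 1) = a t ∨ a (t + 1) = a t + 1)
    (hb : ∀ t, b (t + 1) = b t ∨ b (t + 1) = b t + 1)
    (haLe : ∀ T, advancesBy a T ≤ 2 * lam1 * (n - 1))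
    (hbLe : ∀ T, advancesBy b T ≤ 2 * lam2 * (n - 1))
    (haEq : ∃ T, advancesBy a T = 2 * lam1 * (n - 1))
    (hbEq : ∃ T, advancesBy b T = 2 * lam2 * (n - 1))
    (haWin : ∀ t, advancesBy a t < 2 * lam1 * (n - 1) →
      ∃ s, t ≤ s ∧ s < t + W ∧ a (s + 1) = a s + 1)
    (hbWin : ∀ t, advancesBy b t < 2 * lam2 * (n - 1) →
      ∃ s, t ≤ s ∧ s < t + W ∧ b (s + 1) = b s + 1) :
    ∃ t, a t = b t :=
  euler_cycle_tokens_meet_general n hn lam1 lam2 hl a b ha hb haLe hbEq
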